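/- arXiv:2311.13890 — 6 statements merged into one kernel-verified Lean document; each statement's English description precedes it below -/
import Mathlib

section
/- Let a > 0 be real and b, c, z, t real numbers. Set x = b·a^{−3/2} and y = a·z − b·x/a + c·a^{−3/2}. Let M = a·N + b·N² + c·N³ where N is the 4×4 nilpotent Jordan block, and let H be the upper triangular 4×4 matrix with rows (a^{3/2}, x·a, y, t), (0, a^{1/2}, 0, z), (0, 0, a^{−1/2}, −x/a), (0, 0, 0, a^{−3/2}). Then H is invertible and M·H = H·N (equivalently H⁻¹MH = N). -/
set_option maxHeartbeats 1000000 in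
/-- For real a > 0 and real b, c, z, t, with x = b·a^{−3/2}, y = a·z − b·x/a + c·a^{−3/2},
M = a·N + b·N² + c·N³ (N the 4×4 nilpotent Jordan block), and H the given upper triangular
matrix, H is invertible and M·H = H·N. -/
theorem similarity_A4 (a b c z t : ℝ) (ha : 0 < a) :
    let x : ℝ := b * a ^ (-(3 : ℝ) / 2)
    let y : ℝ := a * z - b * x / a + c * a ^ (-(3 : ℝ) / 2)
    let N : Matrix (Fin 4) (Fin 4) ℝ :=
      !![0, 1, 0, 0;
         0, 0, 1, 0;
         0, 0, 0, 1;
         0, 0, 0, 0]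
    let M : Matrix (Fin 4) (Fin 4) ℝ := a • N + b • N ^ 2 + c • N ^ 3
    let H : Matrix (Fin 4) (Fin 4) ℝ :=
      !![a ^ ((3 : ℝ) / 2), x * a,             y,                    t;
         0,                 a ^ ((1 : ℝ) / 2), 0,                    z;
         0,                 0,                 a ^ (-(1 : ℝ) / 2),   -x / a;
         0,                 0,                 0,                    a ^ (-(3 : ℝ) / 2)]
    IsUnit H ∧ M * H = H * N := by
  intro x y N M H
  have hp : (0:ℝ) < a ^ ((1:ℝ)/2) := Real.rpow_pos_of_pos ha _
  have hpa : a ^ ((1:ℝ)/2) * a ^ ((1:ℝ)/2) = a := by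
    rw [← Real.rpow_add ha]; norm_num
  have h32 : a ^ ((3:ℝ)/2) = a * a ^ ((1:ℝ)/2) := by
    rw [show ((3:ℝ)/2) = 1 + 1/2 by norm_num, Real.rpow_add ha, Real.rpow_one]
  have hn1 : a ^ (-(1:ℝ)/2) = (a ^ ((1:ℝ)/2))⁻¹ := by
    rw [show (-(1:ℝ)/2) = -(1/2) by ring, Real.rpow_neg ha.le]
  have hn3 : a ^ (-(3:ℝ)/2) = (a * a ^ ((1:ℝ)/2))⁻¹ := by
    rw [show (-(3:ℝ)/2) = -(3/2) by ring, Real.rpow_neg ha.le, h32]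
  have hane : a ≠ 0 := ha.ne'
  have hpne : a ^ ((1:ℝ)/2) ≠ 0 := hp.ne'
  have hN2 : N ^ 2 = !![(0:ℝ),0,1,0;0,0,0,1;0,0,0,0;0,0,0,0] := by
    rw [sq]
    ext i j
    fin_cases i <;> fin_cases j <;>
      simp [N, Matrix.mul_apply, Fin.sum_univ_four, Matrix.vecHead, Matrix.vecTail]
  have hN3 : N ^ 3 = !![(0:ℝ),0,0,1;0,0,0,0;0,0,0,0;0,0,0,0] := by
    rw [pow_succ, hN2]
    ext i j
    fin_cases i <;> fin_cases j <;>
      simp [N, Matrix.mul_apply, Fin.sum_univ_four, Matrix.vecHead, Matrix.vecTail]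
  have hM : M = !![(0:ℝ),a,b,c;0,0,a,b;0,0,0,a;0,0,0,0] := by
    show a • N + b • N ^ 2 + c • N ^ 3 = _
    rw [hN2, hN3]
    ext i j
    fin_cases i <;> fin_cases j <;> simp [N, Matrix.vecHead, Matrix.vecTail]
  constructor
  · rw [Matrix.isUnit_iff_isUnit_det, isUnit_iff_ne_zero]
    have hd : H.det = a ^ ((3:ℝ)/2) * (a ^ ((1:ℝ)/2) * (a ^ (-(1:ℝ)/2) * a ^ (-(3:ℝ)/2))) := by
      simp [H, Matrix.det_succ_row_zero, Fin.sum_univ_succ]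
      try ring
    rw [hd]
    positivity
  · rw [hM]
    ext i j
    fin_cases i <;> fin_cases j <;>
      simp [Matrix.mul_apply, Fin.sum_univ_four, H, N, x, y, h32, hn1, hn3,
        Matrix.vecHead, Matrix.vecTail] <;>
      field_simp <;> first | ring1 | nlinarith [hpa, hp, ha]
end

section
/- Let a > 0 be real and b, c, d, g, h, u, w real numbers. Set f = a·h + b/a², v = a·g + b·h + c/a², z = a·f + b/a, t = a·w + b·g + c·h + d/a², y = a·v + b·f + c/a, x = a·z + b. Let M = a·N + b·N² + c·N³ + d·N⁴ where N is the 5×5 nilpotent Jordan block, and let H be the upper triangular 5×5 matrix with rows (a², x, y, t, u), (0, a, z, v, w), (0, 0, 1, f, g), (0, 0, 0, a^{−1}, h), (0, 0, 0, 0, a^{−2}). Then H is invertible and M·H = H·N (equivalently H⁻¹MH = N). -/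
/-!
The columns `h₀, …, h₄` of `H` form a Jordan chain for `M`: `M h₀ = 0` and `M hⱼ = hⱼ₋₁`,
which is `M * H = H * N` read column by column. As `M` is upper triangular Toeplitz with
superdiagonals `a, b, c, d`, the nontrivial entries of these equations are precisely the
defining formulas of `x, y, z, t, v, f`; the others relate consecutive diagonal entries
`a ^ 2, a, 1, a⁻¹, (a ^ 2)⁻¹` of `H`. `H` is upper triangular with nonzero diagonal, hence invertible.
-/

open Matrix

def nilpotentJordanBlock (R : Type*) [Zero R] [One R] (n : ℕ) : Matrix (Fin n) (Fin n) R :=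
  of fun i j => if (j : ℕ) = i + 1 then 1 else 0

theorem nilpotentJordanBlock_apply {R : Type*} [Zero R] [One R] {n : ℕ} (i j : Fin n) :
    nilpotentJordanBlock R n i j = if (j : ℕ) = i + 1 then 1 else 0 :=
  rfl

theorem nilpotentJordanBlock_pow_apply {R : Type*} [Semiring R] {n : ℕ} (k : ℕ) (i j : Fin n) :
    (nilpotentJordanBlock R n ^ k) i j = if (j : ℕ) = i + k then 1 else 0 := by
  induction k generalizing j with
  | zero => simp [one_apply, Fin.ext_iff, eq_comm]
  | succ k ih =>
    simp only [pow_succ, mul_apply, ih, nilpotentJordanBlock_apply, mul_ite, mul_one, mul_zero]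
    split_ifs with hj
    · rw [Finset.sum_eq_single ⟨j - 1, by omega⟩] <;> grind
    · exact Finset.sum_eq_zero fun l _ => by grind

theorem nilpotentJordanBlock_five {R : Type*} [Zero R] [One R] :
    nilpotentJordanBlock R 5 =
      !![0, 1, 0, 0, 0;
         0, 0, 1, 0, 0;
         0, 0, 0, 1, 0;
         0, 0, 0, 0, 1;
         0, 0, 0, 0, 0] := by
  ext i j
  fin_cases i <;> fin_cases j <;> rfl

theorem polynomial_nilpotentJordanBlock_five {R : Type*} [CommSemiring R] (a b c d : R) :
    a • nilpotentJordanBlock R 5 + b • nilpotentJordanBlock R 5 ^ 2 +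
        c • nilpotentJordanBlock R 5 ^ 3 + d • nilpotentJordanBlock R 5 ^ 4 =
      !![0, a, b, c, d;
         0, 0, a, b, c;
         0, 0, 0, a, b;
         0, 0, 0, 0, a;
         0, 0, 0, 0, 0] := by
  ext i j
  simp only [Matrix.add_apply, Matrix.smul_apply, nilpotentJordanBlock_pow_apply,
    nilpotentJordanBlock_apply]
  fin_cases i <;> fin_cases j <;> simp

theorem isUnit_of_isUpperTriangular {K n : Type*} [Field K] [Fintype n] [DecidableEq n]
    [LinearOrder n] {A : Matrix n n K} (hA : A.IsUpperTriangular) (hdiag : ∀ i, A i i ≠ 0) :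
    IsUnit A := by
  rw [isUnit_iff_isUnit_det, det_of_isUpperTriangular hA, isUnit_iff_ne_zero]
  exact Finset.prod_ne_zero_iff.mpr fun i _ => hdiag i

/-- For real a > 0 and real b, c, d, g, h, u, w, with the derived quantities
f = a·h + b/a², v = a·g + b·h + c/a², z = a·f + b/a, t = a·w + b·g + c·h + d/a²,
y = a·v + b·f + c/a, x = a·z + b, M = a·N + b·N² + c·N³ + d·N⁴ (N the 5×5 nilpotent
Jordan block), and H the given upper triangular matrix, H is invertible and M·H = H·N. -/
theorem similarity_A5 (a b c d g h u w : ℝ) (ha : 0 < a) :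
    let f : ℝ := a * h + b / a ^ 2
    let v : ℝ := a * g + b * h + c / a ^ 2
    let z : ℝ := a * f + b / a
    let t : ℝ := a * w + b * g + c * h + d / a ^ 2
    let y : ℝ := a * v + b * f + c / a
    let x : ℝ := a * z + b
    let N : Matrix (Fin 5) (Fin 5) ℝ :=
      !![0, 1, 0, 0, 0;
         0, 0, 1, 0, 0;
         0, 0, 0, 1, 0;
         0, 0, 0, 0, 1;
         0, 0, 0, 0, 0]
    let M : Matrix (Fin 5) (Fin 5) ℝ := a • N + b • N ^ 2 + c • N ^ 3 + d • N ^ 4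
    let H : Matrix (Fin 5) (Fin 5) ℝ :=
      !![a ^ 2, x, y, t, u;
         0,     a, z, v, w;
         0,     0, 1, f, g;
         0,     0, 0, a⁻¹, h;
         0,     0, 0, 0, (a ^ 2)⁻¹]
    IsUnit H ∧ M * H = H * N := by
  intro f v z t y x N M H
  have ha0 : a ≠ 0 := ha.ne'
  have hM : M = !![0, a, b, c, d; 0, 0, a, b, c; 0, 0, 0, a, b; 0, 0, 0, 0, a; 0, 0, 0, 0, 0] := by
    simpa only [nilpotentJordanBlock_five] using polynomial_nilpotentJordanBlock_five a b c d
  refine ⟨isUnit_of_isUpperTriangular ?_ ?_, ?_⟩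
  · intro i j hji
    fin_cases i <;> fin_cases j <;> simp_all [H]
  · intro i
    fin_cases i <;> simp [H, ha0]
  · ext i j
    fin_cases i <;> fin_cases j <;>
      simp [hM, H, N, mul_apply, Fin.sum_univ_five, f, v, z, t, y, x] <;> field_simp
end

section
/- Suppose T : ℕ → (ℝ × ℝ × ℝ → ℂ) satisfies T₁(u,v,w) = w and, for all k ≥ 1 and all u, v, w with v ≠ 0, T_{k+1}(u,v,w) = w·T_k(u,v,w) + ((w − (u+iv)/2)^k − (w − (u−iv)/2)^k)/(i·v) · (u²+v²)/4. Then for every k ≥ 1 and all real φ, w with sin φ ≠ 0, T_k(cos φ, sin φ, w) = ((−1)^{k+1}/sin φ) · Im( e^{−iφ} ( (1/2)e^{iφ} − w )^k ). -/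
open Complex

lemma imc (z : ℂ) : ((z.im : ℝ) : ℂ) = (z - (starRingEnd ℂ) z) / (2 * Complex.I) := by
  rw [Complex.sub_conj]; push_cast; field_simp

lemma conjE (φ : ℝ) : (starRingEnd ℂ) (Complex.exp ((φ:ℂ) * Complex.I)) = Complex.exp (-(φ:ℂ) * Complex.I) := by
  rw [← Complex.exp_conj]; congr 1; simp [Complex.conj_ofReal]

lemma conjF (φ : ℝ) : (starRingEnd ℂ) (Complex.exp (-(φ:ℂ) * Complex.I)) = Complex.exp ((φ:ℂ) * Complex.I) := by
  rw [← Complex.exp_conj]; congr 1; simp [Complex.conj_ofReal]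

lemma hEFl (φ : ℝ) : Complex.exp ((φ:ℂ) * Complex.I) * Complex.exp (-(φ:ℂ) * Complex.I) = 1 := by
  rw [← Complex.exp_add]; ring_nf; exact Complex.exp_zero

lemma hEl (φ : ℝ) : Complex.exp ((φ:ℂ) * Complex.I) = (Real.cos φ : ℂ) + (Real.sin φ : ℂ) * Complex.I := by
  rw [Complex.exp_mul_I, Complex.ofReal_cos, Complex.ofReal_sin]

lemma hFl (φ : ℝ) : Complex.exp (-(φ:ℂ) * Complex.I) = (Real.cos φ : ℂ) - (Real.sin φ : ℂ) * Complex.I := by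
  have h : (-(φ:ℂ)) * Complex.I = (((-φ : ℝ)):ℂ) * Complex.I := by push_cast; ring
  rw [h, hEl (-φ), Real.cos_neg, Real.sin_neg]; push_cast; ring

/-- If T : ℕ → (ℝ × ℝ × ℝ → ℂ) satisfies T₁(u,v,w) = w and the stated recursion
(for v ≠ 0), then for every k ≥ 1 and all real φ, w with sin φ ≠ 0,
T_k(cos φ, sin φ, w) = ((−1)^{k+1}/sin φ)·Im(e^{−iφ}((1/2)e^{iφ} − w)^k). -/
theorem tangential_closed_form (T : ℕ → ℝ × ℝ × ℝ → ℂ)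
    (h1 : ∀ u v w : ℝ, T 1 (u, v, w) = (w : ℂ))
    (hrec : ∀ k : ℕ, 1 ≤ k → ∀ u v w : ℝ, v ≠ 0 →
      T (k + 1) (u, v, w) =
        (w : ℂ) * T k (u, v, w) +
          (((w : ℂ) - ((u : ℂ) + Complex.I * (v : ℂ)) / 2) ^ k -
              ((w : ℂ) - ((u : ℂ) - Complex.I * (v : ℂ)) / 2) ^ k) / (Complex.I * (v : ℂ)) *
            (((u : ℂ) ^ 2 + (v : ℂ) ^ 2) / 4)) :
    ∀ k : ℕ, 1 ≤ k → ∀ φ w : ℝ, Real.sin φ ≠ 0 →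
      T k (Real.cos φ, Real.sin φ, w) =
        ((((-1 : ℝ) ^ (k + 1) / Real.sin φ) *
          (Complex.exp (-(φ : ℂ) * Complex.I) *
            ((1 / 2) * Complex.exp ((φ : ℂ) * Complex.I) - (w : ℂ)) ^ k).im : ℝ) : ℂ) := by
  intro k hk φ w hs
  have hs' : (Real.sin φ : ℂ) ≠ 0 := by exact_mod_cast hs
  have hef := hEFl φ
  have hmf : Complex.exp ((φ:ℂ) * Complex.I) - Complex.exp (-(φ:ℂ) * Complex.I)
      = 2 * (Real.sin φ : ℂ) * Complex.I := by rw [hEl, hFl]; ring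
  have h2 : ((w:ℂ) - ((Real.cos φ:ℂ) + Complex.I * (Real.sin φ:ℂ)) / 2)
      = -((1/2) * Complex.exp ((φ:ℂ) * Complex.I) - (w:ℂ)) := by rw [hEl]; ring
  have h3 : ((w:ℂ) - ((Real.cos φ:ℂ) - Complex.I * (Real.sin φ:ℂ)) / 2)
      = -((1/2) * Complex.exp (-(φ:ℂ) * Complex.I) - (w:ℂ)) := by rw [hFl]; ring
  have h4 : ((Real.cos φ:ℂ)^2 + (Real.sin φ:ℂ)^2) = 1 := by
    norm_cast; exact Real.cos_sq_add_sin_sq φ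
  induction k, hk using Nat.le_induction with
  | base =>
    rw [h1]
    simp only [Complex.ofReal_mul, Complex.ofReal_div, Complex.ofReal_pow, Complex.ofReal_neg,
      Complex.ofReal_one, imc]
    simp only [map_mul, map_sub, map_pow, map_div₀, map_one, map_ofNat, Complex.conj_ofReal,
      conjE, conjF]
    set E := Complex.exp ((φ:ℂ) * Complex.I) with hEdef
    set F := Complex.exp (-(φ:ℂ) * Complex.I) with hFdef
    clear_value E F
    rw [div_mul_eq_mul_div, eq_div_iff hs', ← mul_div_assoc,
      eq_div_iff (by simp [Complex.I_ne_zero] : (2 : ℂ) * Complex.I ≠ 0)]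
    linear_combination (-(w:ℂ)) * hmf
  | succ k hk ih =>
    rw [hrec k hk _ _ _ hs, ih, h2, h3, h4,
      neg_pow ((1/2) * Complex.exp ((φ:ℂ) * Complex.I) - (w:ℂ)) k,
      neg_pow ((1/2) * Complex.exp (-(φ:ℂ) * Complex.I) - (w:ℂ)) k]
    simp only [Complex.ofReal_mul, Complex.ofReal_div, Complex.ofReal_pow, Complex.ofReal_neg,
      Complex.ofReal_one, imc]
    simp only [map_mul, map_sub, map_pow, map_div₀, map_one, map_ofNat, Complex.conj_ofReal,
      conjE, conjF]
    set E := Complex.exp ((φ:ℂ) * Complex.I) with hEdef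
    set F := Complex.exp (-(φ:ℂ) * Complex.I) with hFdef
    clear_value E F
    rw [pow_succ ((1/2) * E - (w:ℂ)) k, pow_succ ((1/2) * F - (w:ℂ)) k,
      pow_succ ((-1:ℂ)) (k+1), pow_succ ((-1:ℂ)) k]
    linear_combination (((-1:ℂ))^k * (((1/2)*F - (w:ℂ))^k - ((1/2)*E - (w:ℂ))^k)
      / (4 * Complex.I * (Real.sin φ : ℂ))) * hef
end

section
/- Suppose T : ℕ → (ℝ × ℝ × ℝ → ℂ) satisfies T₁(u,v,w) = w and, for all k ≥ 1 and all u, v, w with v ≠ 0, T_{k+1}(u,v,w) = w·T_k(u,v,w) + ((w − (u+iv)/2)^k − (w − (u−iv)/2)^k)/(i·v) · (u²+v²)/4. Then for every integer k ≥ 1 and every real θ with sin(θ/2) ≠ 0 and sin(kθ/2) ≠ 0, setting φ = kθ/2 and w = −(1/2)·sin((k−1)θ/2)/sin(θ/2), one has T_k(cos φ, sin φ, w) = 0. -/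
/-!
Write `z = u + i v`, `a = w - z / 2` and `b = w - z̄ / 2`. Since `z z̄ = u² + v²`, induction on the
recursion gives the closed form `2 i v T_j = z b^j - z̄ a^j`. At the point in question
`z = ζ^k` with `ζ = e^{iθ/2}`, while `a = c ζ` and `b = c ζ̄` for `c = -sin φ / (2 sin (θ/2))`, so both
terms of the closed form equal `c^k` and `T_k` vanishes.
-/

theorem tangential_recurrence_closed_form {K : Type*} [Field K] [NeZero (2 : K)] {i u v w : K}
    (hi : i ^ 2 = -1) (hv : v ≠ 0) (t : ℕ → K) (h1 : t 1 = w)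
    (hrec : ∀ j, 1 ≤ j → t (j + 1) = w * t j +
      ((w - (u + i * v) / 2) ^ j - (w - (u - i * v) / 2) ^ j) / (i * v) * ((u ^ 2 + v ^ 2) / 4)) :
    ∀ j, 1 ≤ j → 2 * (i * v) * t j =
      (u + i * v) * (w - (u - i * v) / 2) ^ j - (u - i * v) * (w - (u + i * v) / 2) ^ j := by
  have hi0 : i ≠ 0 := by rintro rfl; norm_num at hi
  have h4 : (4 : K) ≠ 0 := by
    rw [show (4 : K) = 2 ^ 2 by norm_num]; exact pow_ne_zero 2 two_ne_zero
  intro j hj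
  induction j, hj using Nat.le_induction with
  | base => rw [h1]; ring
  | succ j hj ih =>
    generalize ha : w - (u + i * v) / 2 = a at *
    generalize hb : w - (u - i * v) / 2 = b at *
    have hdiv : 2 * (i * v) * ((a ^ j - b ^ j) / (i * v) * ((u ^ 2 + v ^ 2) / 4)) =
        (a ^ j - b ^ j) * (u ^ 2 + v ^ 2) / 2 := by
      field_simp; ring
    rw [hrec j hj, mul_add, mul_left_comm, ih, hdiv, pow_succ, pow_succ]
    linear_combination (a ^ j - b ^ j) * v ^ 2 / 2 * hi + (u + i * v) * b ^ j * hb -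
      (u - i * v) * a ^ j * ha

open Complex in
theorem closed_form_terms_eq_of_sin_half_ne_zero (k : ℕ) {θ : ℂ} (hs : sin (θ / 2) ≠ 0) :
    let u := cos (k * θ / 2)
    let v := sin (k * θ / 2)
    let w := -(1 / 2) * sin ((k - 1) * θ / 2) / sin (θ / 2)
    (u + I * v) * (w - (u - I * v) / 2) ^ k = (u - I * v) * (w - (u + I * v) / 2) ^ k := by
  intro u v w
  set c := -v / (2 * sin (θ / 2))
  have hsin : sin ((k - 1) * θ / 2) = v * cos (θ / 2) - u * sin (θ / 2) := by
    rw [show ((k : ℂ) - 1) * θ / 2 = k * θ / 2 - θ / 2 by ring, sin_sub]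
  have hz : u + I * v = (cos (θ / 2) + sin (θ / 2) * I) ^ k := by
    rw [cos_add_sin_mul_I_pow]; simp only [u, v, mul_div_assoc]; ring
  have hz' : u - I * v = (cos (-(θ / 2)) + sin (-(θ / 2)) * I) ^ k := by
    rw [cos_add_sin_mul_I_pow, mul_neg, cos_neg, sin_neg]; simp only [u, v, mul_div_assoc]; ring
  have ha : w - (u + I * v) / 2 = c * (cos (θ / 2) + sin (θ / 2) * I) := by
    simp only [w, c, hsin]; field_simp; ring
  have hb : w - (u - I * v) / 2 = c * (cos (-(θ / 2)) + sin (-(θ / 2)) * I) := by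
    simp only [w, c, hsin, cos_neg, sin_neg]; field_simp; ring
  rw [ha, hb, hz, hz', mul_pow, mul_pow]
  ring

/-- If T : ℕ → (ℝ × ℝ × ℝ → ℂ) satisfies T₁(u,v,w) = w and the stated recursion
(for v ≠ 0), then for every k ≥ 1 and real θ with sin(θ/2) ≠ 0 and sin(kθ/2) ≠ 0,
setting φ = kθ/2 and w = −(1/2)·sin((k−1)θ/2)/sin(θ/2), one has
T_k(cos φ, sin φ, w) = 0. -/
theorem tangential_vanishes (T : ℕ → ℝ × ℝ × ℝ → ℂ)
    (h1 : ∀ u v w : ℝ, T 1 (u, v, w) = (w : ℂ))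
    (hrec : ∀ k : ℕ, 1 ≤ k → ∀ u v w : ℝ, v ≠ 0 →
      T (k + 1) (u, v, w) =
        (w : ℂ) * T k (u, v, w) +
          (((w : ℂ) - ((u : ℂ) + Complex.I * (v : ℂ)) / 2) ^ k -
              ((w : ℂ) - ((u : ℂ) - Complex.I * (v : ℂ)) / 2) ^ k) / (Complex.I * (v : ℂ)) *
            (((u : ℂ) ^ 2 + (v : ℂ) ^ 2) / 4)) :
    ∀ k : ℕ, 1 ≤ k → ∀ θ : ℝ, Real.sin (θ / 2) ≠ 0 → Real.sin ((k : ℝ) * θ / 2) ≠ 0 →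
      T k (Real.cos ((k : ℝ) * θ / 2), Real.sin ((k : ℝ) * θ / 2),
          -(1 / 2) * Real.sin (((k : ℝ) - 1) * θ / 2) / Real.sin (θ / 2)) = 0 := by
  intro k hk θ hs hv
  have hvC : ((Real.sin (k * θ / 2) : ℝ) : ℂ) ≠ 0 := Complex.ofReal_ne_zero.mpr hv
  have hsC : Complex.sin (θ / 2) ≠ 0 := by exact_mod_cast hs
  have hclosed := tangential_recurrence_closed_form Complex.I_sq hvC
    (fun j => T j (Real.cos (k * θ / 2), Real.sin (k * θ / 2),
      -(1 / 2) * Real.sin ((k - 1) * θ / 2) / Real.sin (θ / 2)))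
    (h1 _ _ _) (fun j hj => hrec j hj _ _ _ hv) k hk
  push_cast at hclosed hvC
  rw [closed_form_terms_eq_of_sin_half_ne_zero k hsC, sub_self] at hclosed
  simpa [hvC, Complex.I_ne_zero] using hclosed
end

section
/- Let k ≥ 3 and let A_k be the k×k complex matrix with ones strictly above the diagonal and zeros elsewhere. Then the vertical segment { −1/2 + i·y : y ∈ ℝ, |y| ≤ (1/2)·cot(π/k) } is contained in the numerical range W(A_k); that is, for every such y there exists x ∈ ℂ^k with ‖x‖₂ = 1 and x* A_k x = −1/2 + i·y. -/
/-!
Let `ω = exp (2πi/k)`, `u = (ω ^ j)_j` and `v = (ω ^ (-j))_j`. These are orthogonal with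
`‖u‖² = ‖v‖² = k`, and geometric sums give `u* A u = k (ω⁻¹ - 1)⁻¹`, `v* A v = k (ω - 1)⁻¹` and
`u* A v = v* A u = 0`, the last because `ω² ≠ 1` for `k ≥ 3`. Since
`(exp (2iθ) - 1)⁻¹ = -1/2 - (i/2) cot θ`, for real `a, b` with `k (a² + b²) = 1` the vector
`x = a u + b v` is a unit vector with `x* A x = -1/2 + (i/2) k (a² - b²) cot (π/k)`, and
`k (a² - b²)` ranges over `[-1, 1]`.
-/

open Finset Matrix Complex

theorem geom_sum_range_eq_zero_of_pow_eq_one {K : Type*} [DivisionRing K] {ζ : K} {k : ℕ}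
    (hζk : ζ ^ k = 1) (hζ : ζ ≠ 1) : ∑ i ∈ range k, ζ ^ i = 0 := by
  rw [geom_sum_eq hζ, hζk, sub_self, zero_div]

theorem sum_range_sum_range_pow_mul_pow {K : Type*} [Field K] {ζ : K} (hζ : ζ ≠ 1) (ξ : K)
    (k : ℕ) : ∑ j ∈ range k, ∑ i ∈ range j, ζ ^ i * ξ ^ j =
      (∑ j ∈ range k, (ζ * ξ) ^ j - ∑ j ∈ range k, ξ ^ j) / (ζ - 1) := by
  simp_rw [← sum_mul, geom_sum_eq hζ, div_mul_eq_mul_div, ← sum_div, sub_mul, one_mul,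
    ← mul_pow, sum_sub_distrib]

theorem Fin.sum_ite_val_lt_eq_sum_range {M : Type*} [AddCommMonoid M] {k j : ℕ} (hj : j ≤ k)
    (f : ℕ → M) : ∑ i : Fin k, (if (i : ℕ) < j then f i else 0) = ∑ i ∈ range j, f i := by
  rw [Fin.sum_univ_eq_sum_range (fun i => if i < j then f i else 0), ← sum_filter]
  congr 1
  ext i
  simp only [mem_filter, mem_range]
  omega

theorem exists_sq_add_sq_eq_and_sq_sub_sq_eq {s t : ℝ} (ht : |t| ≤ s) :
    ∃ a b : ℝ, a ^ 2 + b ^ 2 = s ∧ a ^ 2 - b ^ 2 = t := by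
  obtain ⟨hts, hst⟩ := abs_le.mp ht
  refine ⟨√((s + t) / 2), √((s - t) / 2), ?_, ?_⟩ <;>
    rw [Real.sq_sqrt (by linarith), Real.sq_sqrt (by linarith)] <;> ring

theorem star_smul_add_smul_dotProduct_mulVec {n : Type*} [Fintype n]
    (M : Matrix n n ℂ) (u v : n → ℂ) (a b : ℝ) :
    star ((a : ℂ) • u + (b : ℂ) • v) ⬝ᵥ M *ᵥ ((a : ℂ) • u + (b : ℂ) • v) =
      (a : ℂ) ^ 2 * (star u ⬝ᵥ M *ᵥ u) + a * b * (star u ⬝ᵥ M *ᵥ v + star v ⬝ᵥ M *ᵥ u) +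
        (b : ℂ) ^ 2 * (star v ⬝ᵥ M *ᵥ v) := by
  simp only [star_add, star_smul, Complex.star_def, conj_ofReal, mulVec_add, mulVec_smul,
    add_dotProduct, dotProduct_add, smul_dotProduct, dotProduct_smul, smul_eq_mul]
  ring

theorem ofReal_sum_norm_sq_eq_star_dotProduct {n : Type*} [Fintype n] (x : n → ℂ) :
    ((∑ i, ‖x i‖ ^ 2 : ℝ) : ℂ) = star x ⬝ᵥ x := by
  simp [dotProduct, conj_mul']

theorem sum_sum_conj_mul_mul_eq_star_dotProduct_mulVec {n : Type*} [Fintype n]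
    (A : Matrix n n ℂ) (x : n → ℂ) :
    ∑ i, ∑ j, starRingEnd ℂ (x i) * A i j * x j = star x ⬝ᵥ A *ᵥ x := by
  simp [dotProduct, mulVec, mul_sum, mul_assoc]

theorem Real.cot_pos_of_mem_Ioo {θ : ℝ} (hθ : θ ∈ Set.Ioo 0 (Real.pi / 2)) :
    0 < Real.cot θ := by
  have hsin := Real.sin_pos_of_pos_of_lt_pi hθ.1 (by linarith [hθ.2, Real.pi_pos])
  have hcos := Real.cos_pos_of_mem_Ioo ⟨by linarith [hθ.1, Real.pi_pos], hθ.2⟩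
  rw [Real.cot_eq_cos_div_sin]
  positivity

theorem pi_div_natCast_mem_Ioo {k : ℕ} (hk : 3 ≤ k) :
    Real.pi / k ∈ Set.Ioo 0 (Real.pi / 2) := by
  refine ⟨by positivity, div_lt_div_of_pos_left Real.pi_pos two_pos ?_⟩
  exact_mod_cast (by omega : 2 < k)

theorem sin_pi_div_natCast_pos {k : ℕ} (hk : 2 ≤ k) : 0 < Real.sin (Real.pi / k) := by
  refine Real.sin_pos_of_pos_of_lt_pi (by positivity) (div_lt_self Real.pi_pos ?_)
  exact_mod_cast (by omega : 1 < k)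

theorem inv_exp_two_mul_I_sub_one {θ : ℝ} (hθ : Real.sin θ ≠ 0) :
    (exp (2 * θ * I) - 1)⁻¹ = -(1 / 2) - Real.cot θ / 2 * I := by
  refine inv_eq_of_mul_eq_one_right ?_
  have hs : sin (θ : ℂ) ≠ 0 := by exact_mod_cast hθ
  rw [exp_mul_I, cos_two_mul, sin_two_mul, Real.cot_eq_cos_div_sin]
  push_cast
  field_simp
  linear_combination (-2 * cos (θ : ℂ) * I) * sin_sq_add_cos_sq (θ : ℂ) -
    2 * cos (θ : ℂ) ^ 2 * sin (θ : ℂ) * I_sq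

theorem inv_exp_two_pi_mul_I_div_sub_one {k : ℕ} (hk : 2 ≤ k) :
    (exp (2 * Real.pi * I / k) - 1)⁻¹ = -(1 / 2) - Real.cot (Real.pi / k) / 2 * I := by
  rw [show 2 * Real.pi * I / k = 2 * ((Real.pi / k : ℝ) : ℂ) * I by push_cast; ring]
  exact inv_exp_two_mul_I_sub_one (sin_pi_div_natCast_pos hk).ne'

theorem inv_inv_exp_two_pi_mul_I_div_sub_one {k : ℕ} (hk : 2 ≤ k) :
    ((exp (2 * Real.pi * I / k))⁻¹ - 1)⁻¹ = -(1 / 2) + Real.cot (Real.pi / k) / 2 * I := by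
  rw [← Complex.exp_neg, show -(2 * Real.pi * I / k) = 2 * ((-(Real.pi / k) : ℝ) : ℂ) * I by
      push_cast; ring, inv_exp_two_mul_I_sub_one (by simpa using (sin_pi_div_natCast_pos hk).ne')]
  simp [Real.cot_eq_cos_div_sin]
  ring

def upperOnes (k : ℕ) : Matrix (Fin k) (Fin k) ℂ :=
  fun i j => if (i : ℕ) < (j : ℕ) then 1 else 0

def powVec (k : ℕ) (ζ : ℂ) : Fin k → ℂ := fun i => ζ ^ (i : ℕ)

theorem star_powVec (k : ℕ) (ζ : ℂ) : star (powVec k ζ) = powVec k (star ζ) := by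
  ext i
  simp [powVec]

theorem powVec_dotProduct_powVec (k : ℕ) (ζ ξ : ℂ) :
    powVec k ζ ⬝ᵥ powVec k ξ = ∑ i ∈ range k, (ζ * ξ) ^ i := by
  simp only [dotProduct, powVec, ← mul_pow]
  exact Fin.sum_univ_eq_sum_range (fun i => (ζ * ξ) ^ i) k

theorem powVec_dotProduct_upperOnes_mulVec_powVec (k : ℕ) (ζ ξ : ℂ) :
    powVec k ζ ⬝ᵥ upperOnes k *ᵥ powVec k ξ = ∑ j ∈ range k, ∑ i ∈ range j, ζ ^ i * ξ ^ j := by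
  simp only [dotProduct, mulVec, upperOnes, powVec, ite_mul, one_mul, zero_mul, mul_sum, mul_ite,
    mul_zero]
  rw [sum_comm, ← Fin.sum_univ_eq_sum_range (fun j => ∑ i ∈ range j, ζ ^ i * ξ ^ j)]
  exact sum_congr rfl fun j _ =>
    Fin.sum_ite_val_lt_eq_sum_range j.is_le' (fun i => ζ ^ i * ξ ^ (j : ℕ))

namespace IsPrimitiveRoot

variable {ζ : ℂ} {k : ℕ} (hζ : IsPrimitiveRoot ζ k)
include hζ

theorem star_eq_inv (hk : k ≠ 0) : star ζ = ζ⁻¹ :=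
  (inv_eq_conj (hζ.norm'_eq_one hk)).symm

theorem geom_sum_sq_eq_zero (hk : 3 ≤ k) : ∑ i ∈ range k, (ζ ^ 2) ^ i = 0 :=
  geom_sum_range_eq_zero_of_pow_eq_one
    (by rw [← pow_mul, mul_comm, pow_mul, hζ.pow_eq_one, one_pow])
    (hζ.pow_ne_one_of_pos_of_lt two_ne_zero (by omega))

theorem star_powVec_dotProduct_powVec (hk : k ≠ 0) :
    star (powVec k ζ) ⬝ᵥ powVec k ζ = k := by
  rw [star_powVec, hζ.star_eq_inv hk, powVec_dotProduct_powVec, inv_mul_cancel₀ (hζ.ne_zero hk)]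
  simp

theorem star_powVec_dotProduct_powVec_inv (hk : 3 ≤ k) :
    star (powVec k ζ) ⬝ᵥ powVec k ζ⁻¹ = 0 := by
  rw [star_powVec, hζ.star_eq_inv (by omega), powVec_dotProduct_powVec, ← sq]
  exact hζ.inv.geom_sum_sq_eq_zero hk

theorem star_powVec_dotProduct_upperOnes_mulVec_powVec (hk : 1 < k) :
    star (powVec k ζ) ⬝ᵥ upperOnes k *ᵥ powVec k ζ = k * (ζ⁻¹ - 1)⁻¹ := by
  rw [star_powVec, hζ.star_eq_inv (by omega), powVec_dotProduct_upperOnes_mulVec_powVec,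
    sum_range_sum_range_pow_mul_pow (hζ.inv.ne_one (by omega)),
    inv_mul_cancel₀ (hζ.ne_zero (by omega)), hζ.geom_sum_eq_zero (by omega)]
  simp [div_eq_mul_inv]

theorem star_powVec_dotProduct_upperOnes_mulVec_powVec_inv (hk : 3 ≤ k) :
    star (powVec k ζ) ⬝ᵥ upperOnes k *ᵥ powVec k ζ⁻¹ = 0 := by
  rw [star_powVec, hζ.star_eq_inv (by omega), powVec_dotProduct_upperOnes_mulVec_powVec,
    sum_range_sum_range_pow_mul_pow (hζ.inv.ne_one (by omega)), ← sq,
    hζ.inv.geom_sum_eq_zero (by omega), hζ.inv.geom_sum_sq_eq_zero hk]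
  simp

theorem star_dotProduct_smul_powVec_add_smul_powVec_inv (hk : 3 ≤ k) (a b : ℝ) :
    star ((a : ℂ) • powVec k ζ + (b : ℂ) • powVec k ζ⁻¹) ⬝ᵥ
      ((a : ℂ) • powVec k ζ + (b : ℂ) • powVec k ζ⁻¹) = (a ^ 2 + b ^ 2 : ℝ) * k := by
  have hvu := hζ.inv.star_powVec_dotProduct_powVec_inv hk
  rw [inv_inv] at hvu
  have h := star_smul_add_smul_dotProduct_mulVec 1 (powVec k ζ) (powVec k ζ⁻¹) a b
  simp only [one_mulVec] at h
  rw [h, hζ.star_powVec_dotProduct_powVec (by omega),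
    hζ.inv.star_powVec_dotProduct_powVec (by omega), hζ.star_powVec_dotProduct_powVec_inv hk, hvu]
  push_cast
  ring

theorem star_dotProduct_upperOnes_mulVec_smul_powVec_add_smul_powVec_inv (hk : 3 ≤ k)
    (a b : ℝ) :
    star ((a : ℂ) • powVec k ζ + (b : ℂ) • powVec k ζ⁻¹) ⬝ᵥ
      upperOnes k *ᵥ ((a : ℂ) • powVec k ζ + (b : ℂ) • powVec k ζ⁻¹) =
        k * (a ^ 2 * (ζ⁻¹ - 1)⁻¹ + b ^ 2 * (ζ - 1)⁻¹) := by
  have hvv := hζ.inv.star_powVec_dotProduct_upperOnes_mulVec_powVec (by omega)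
  have hvu := hζ.inv.star_powVec_dotProduct_upperOnes_mulVec_powVec_inv hk
  rw [inv_inv] at hvv hvu
  rw [star_smul_add_smul_dotProduct_mulVec,
    hζ.star_powVec_dotProduct_upperOnes_mulVec_powVec (by omega),
    hζ.star_powVec_dotProduct_upperOnes_mulVec_powVec_inv hk, hvv, hvu]
  ring

end IsPrimitiveRoot

/-- For k ≥ 3 and A_k the k×k strictly-upper-triangular all-ones matrix, the
vertical segment {−1/2 + iy : |y| ≤ (1/2)cot(π/k)} is contained in the numerical
range W(A_k). -/
theorem flat_segment_in_range (k : ℕ) (hk : 3 ≤ k) (y : ℝ)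
    (hy : |y| ≤ (1 / 2) * Real.cot (Real.pi / k)) :
    let A : Matrix (Fin k) (Fin k) ℂ := fun i j => if (i : ℕ) < (j : ℕ) then 1 else 0
    ∃ x : Fin k → ℂ, ∑ i, ‖x i‖ ^ 2 = 1 ∧
      (∑ i, ∑ j, (starRingEnd ℂ) (x i) * A i j * x j) = -(1 / 2) + (y : ℂ) * Complex.I := by
  intro A
  have hk₀ : (0 : ℝ) < k := by positivity
  have hcot : 0 < Real.cot (Real.pi / k) := Real.cot_pos_of_mem_Ioo (pi_div_natCast_mem_Ioo hk)
  obtain ⟨a, b, hab, hab'⟩ := exists_sq_add_sq_eq_and_sq_sub_sq_eq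
    (s := 1 / k) (t := 2 * y / (k * Real.cot (Real.pi / k))) (by
      rw [abs_div, abs_mul, abs_two, abs_of_pos (mul_pos hk₀ hcot),
        div_le_div_iff₀ (by positivity) hk₀]
      nlinarith)
  have hsum : (k : ℂ) * ((a : ℂ) ^ 2 + (b : ℂ) ^ 2) = 1 := by
    exact_mod_cast (by rw [hab]; field_simp : k * (a ^ 2 + b ^ 2) = 1)
  have hdiff : (k : ℂ) * ((a : ℂ) ^ 2 - (b : ℂ) ^ 2) * (Real.cot (Real.pi / k) : ℂ) = 2 * y := by
    exact_mod_cast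
      (by rw [hab']; field_simp : k * (a ^ 2 - b ^ 2) * Real.cot (Real.pi / k) = 2 * y)
  have hω := isPrimitiveRoot_exp k (by omega)
  refine ⟨(a : ℂ) • powVec k (exp (2 * Real.pi * I / k)) +
    (b : ℂ) • powVec k (exp (2 * Real.pi * I / k))⁻¹, ?_, ?_⟩
  · apply ofReal_injective
    rw [ofReal_sum_norm_sq_eq_star_dotProduct,
      hω.star_dotProduct_smul_powVec_add_smul_powVec_inv hk]
    push_cast
    linear_combination hsum
  · change ∑ i, ∑ j, _ * upperOnes k i j * _ = _
    rw [sum_sum_conj_mul_mul_eq_star_dotProduct_mulVec,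
      hω.star_dotProduct_upperOnes_mulVec_smul_powVec_add_smul_powVec_inv hk,
      inv_exp_two_pi_mul_I_div_sub_one (by omega), inv_inv_exp_two_pi_mul_I_div_sub_one (by omega)]
    linear_combination (-(1 / 2)) * hsum + I / 2 * hdiff
end

section
/- Let A₃ be the 3×3 complex matrix with ones strictly above the diagonal and zeros elsewhere. Then the closed rectangle { z ∈ ℂ : −1/2 ≤ Re z ≤ 0, |Im z| ≤ √3/6 } is contained in the numerical range W(A₃); that is, for every such z there exists x ∈ ℂ³ with ‖x‖₂ = 1 and x* A₃ x = z. -/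
/-!
The real part of `x* A₃ x` is `(|x₀ + x₁ + x₂|² - ‖x‖²) / 2`, so a unit vector whose component
along `(1,1,1)/√3` has length `q` lands on the line `Re z = q² - p² / 2`, where `p² = 1 - q²`.
Spreading the orthogonal component as `(p / √2) (v + ω w)` over an orthonormal basis `v, w`
of `(1,1,1)^⊥` with a unimodular `ω` leaves the real part alone and gives imaginary part
`Im ω · (√3 p² / 6 + p q)`. For `-1/2 ≤ Re z ≤ 0` this amplitude is at least `√3 / 6`,
so a suitable `ω` reaches every admissible `Im z`.
-/

open Complex ComplexConjugate

lemma quadForm_upperOnes_three (x : Fin 3 → ℂ) :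
    ∑ i : Fin 3, ∑ j : Fin 3, conj (x i) * (if (i : ℕ) < (j : ℕ) then 1 else 0) * x j
      = conj (x 0) * x 1 + conj (x 0) * x 2 + conj (x 1) * x 2 := by
  simp [Fin.sum_univ_three]

lemma sq_norm_ofReal_add_mul (a b c s : ℝ) :
    ‖(a : ℂ) + b * (c + s * I)‖ ^ 2 = (a + b * c) ^ 2 + (b * s) ^ 2 := by
  rw [show (a : ℂ) + b * (c + s * I) = ((a + b * c : ℝ) : ℂ) + ((b * s : ℝ) : ℂ) * I by
    push_cast; ring, Complex.sq_norm, normSq_add_mul_I]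

/-- `q u + (p / √2) (v + ω w)` with `ω = c + s i` and the orthonormal basis
`u = (1,1,1)/√3`, `v = (-1,1,0)/√2`, `w = (-1,-1,2)/√6`. -/
noncomputable def numRangeWitness (p q c s : ℝ) : Fin 3 → ℂ :=
  ![(-p / 2 + q * √3 / 3 : ℝ) + (-p * √3 / 6 : ℝ) * (c + s * I),
    (p / 2 + q * √3 / 3 : ℝ) + (-p * √3 / 6 : ℝ) * (c + s * I),
    (q * √3 / 3 : ℝ) + (p * √3 / 3 : ℝ) * (c + s * I)]

lemma numRangeWitness_sum_sq_norm {c s : ℝ} (p q : ℝ) (hcs : c ^ 2 + s ^ 2 = 1) :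
    ∑ i, ‖numRangeWitness p q c s i‖ ^ 2 = p ^ 2 + q ^ 2 := by
  have h3 : √3 ^ 2 = 3 := Real.sq_sqrt (by norm_num)
  simp only [Fin.sum_univ_three, numRangeWitness, Matrix.cons_val_zero, Matrix.cons_val_one,
    Matrix.cons_val_two, Matrix.head_cons, Matrix.tail_cons, sq_norm_ofReal_add_mul]
  linear_combination (p ^ 2 * √3 ^ 2 / 6) * hcs + (q ^ 2 / 3 + p ^ 2 / 6) * h3

lemma numRangeWitness_quadForm {c s : ℝ} (p q : ℝ) (hcs : c ^ 2 + s ^ 2 = 1) :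
    conj (numRangeWitness p q c s 0) * numRangeWitness p q c s 1 + conj (numRangeWitness p q c s 0) * numRangeWitness p q c s 2
        + conj (numRangeWitness p q c s 1) * numRangeWitness p q c s 2
      = ⟨q ^ 2 - p ^ 2 / 2, s * (√3 / 6 * p ^ 2 + p * q)⟩ := by
  have h3 : √3 ^ 2 = 3 := Real.sq_sqrt (by norm_num)
  simp only [numRangeWitness, Matrix.cons_val_zero, Matrix.cons_val_one,
    Matrix.cons_val_two, Matrix.head_cons, Matrix.tail_cons]
  apply Complex.ext <;>
  simp only [map_add, map_mul, conj_ofReal, conj_I, add_re, add_im, mul_re, mul_im,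
    ofReal_re, ofReal_im, I_re, I_im, neg_re, neg_im]
  · linear_combination (-(p ^ 2 * √3 ^ 2) / 12) * hcs + (q ^ 2 / 3 - p ^ 2 / 12) * h3
  · linear_combination (s * p * q / 3) * h3

lemma sqrt_three_div_six_le {p q : ℝ} (hp : 0 ≤ p) (hq : 0 ≤ q) (hpq : p ^ 2 + q ^ 2 = 1)
    (hq3 : q ^ 2 ≤ 1 / 3) : √3 / 6 ≤ √3 / 6 * p ^ 2 + p * q := by
  have hqp : q ≤ p := by nlinarith
  have h3 : √3 / 6 ≤ 1 := by
    rw [div_le_one (by norm_num), Real.sqrt_le_left (by norm_num)]; norm_num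
  nlinarith [mul_le_mul_of_nonneg_left hqp hq]

lemma exists_sq_add_sq_eq_one_mul_eq {K Y : ℝ} (hK : 0 < K) (hY : |Y| ≤ K) :
    ∃ c s : ℝ, c ^ 2 + s ^ 2 = 1 ∧ s * K = Y := by
  have hs : (Y / K) ^ 2 ≤ 1 := by
    rw [div_pow, div_le_one (by positivity), ← sq_abs]; nlinarith [abs_nonneg Y]
  exact ⟨√(1 - (Y / K) ^ 2), Y / K, by rw [Real.sq_sqrt (by linarith)]; ring,
    div_mul_cancel₀ Y hK.ne'⟩

/-- The closed rectangle {z : −1/2 ≤ Re z ≤ 0, |Im z| ≤ √3/6} is contained in the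
numerical range of the 3×3 matrix with ones strictly above the diagonal. -/
theorem rectangle_in_range (z : ℂ) (h1 : -(1 / 2) ≤ z.re) (h2 : z.re ≤ 0)
    (h3 : |z.im| ≤ Real.sqrt 3 / 6) :
    let A : Matrix (Fin 3) (Fin 3) ℂ := fun i j => if (i : ℕ) < (j : ℕ) then 1 else 0
    ∃ x : Fin 3 → ℂ, ∑ i, ‖x i‖ ^ 2 = 1 ∧
      (∑ i, ∑ j, (starRingEnd ℂ) (x i) * A i j * x j) = z := by
  intro A
  set p := √((2 - 2 * z.re) / 3)
  set q := √((1 + 2 * z.re) / 3)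
  have hp : p ^ 2 = (2 - 2 * z.re) / 3 := Real.sq_sqrt (by linarith)
  have hq : q ^ 2 = (1 + 2 * z.re) / 3 := Real.sq_sqrt (by linarith)
  have hK := sqrt_three_div_six_le (p := p) (q := q) (Real.sqrt_nonneg _) (Real.sqrt_nonneg _)
    (by rw [hp, hq]; ring) (by rw [hq]; linarith)
  obtain ⟨c, s, hcs, hsK⟩ := exists_sq_add_sq_eq_one_mul_eq
    ((by positivity : (0 : ℝ) < √3 / 6).trans_le hK) (h3.trans hK)
  refine ⟨numRangeWitness p q c s, by rw [numRangeWitness_sum_sq_norm p q hcs, hp, hq]; ring, ?_⟩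
  simp only [A, quadForm_upperOnes_three, numRangeWitness_quadForm p q hcs]
  apply Complex.ext
  · rw [hp, hq]; ring
  · exact hsK
end
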